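/- arXiv:1806.03998 — 5 statements merged into one kernel-verified Lean document; each statement's English description precedes it below -/
import Mathlib

section
/- For real x with -1 < x < 1, the sum over n ≥ 1 of H'_n · x^n equals log(1+x)/(1-x), where H'_n = ∑_{k=1}^n (-1)^{k+1}/k is the n-th alternating harmonic number. -/
theorem alt_harmonic_gen_fun (x : ℝ) (hx1 : -1 < x) (hx2 : x < 1) :
    ∑' n : ℕ, (∑ k ∈ Finset.Icc 1 (n + 1), (-1 : ℝ) ^ (k + 1) / k) * x ^ (n + 1)
      = Real.log (1 + x) / (1 - x) := by
  have hxabs : |x| < 1 := abs_lt.2 ⟨hx1, hx2⟩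
  set f : ℕ → ℝ := fun n => (-1) ^ (n + 1) * x ^ n / n with hf
  set g : ℕ → ℝ := fun n => x ^ n with hg
  have hf0 : f 0 = 0 := by simp [hf]
  have hlog : HasSum (fun n : ℕ => (-x) ^ (n + 1) / (n + 1)) (-Real.log (1 - -x)) :=
    Real.hasSum_pow_div_log_of_abs_lt_one (by rwa [abs_neg])
  have key : ∀ n : ℕ, f (n + 1) = -((-x) ^ (n + 1) / ((n : ℝ) + 1)) := by
    intro n
    simp only [hf]
    push_cast
    rw [neg_pow]
    ring
  have hfs : HasSum f (Real.log (1 + x)) := by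
    have h1 : HasSum (fun n : ℕ => f (n + 1)) (Real.log (1 + x)) := by
      simp only [key]
      have h2 := hlog.neg
      rw [neg_neg, sub_neg_eq_add] at h2
      exact h2
    have := (hasSum_nat_add_iff 1).1 h1
    simpa [hf0] using this
  have hgs : HasSum g (1 - x)⁻¹ := hasSum_geometric_of_abs_lt_one hxabs
  have hfnorm : Summable fun n => ‖f n‖ := by
    apply Summable.of_nonneg_of_le (fun n => norm_nonneg _) (fun n => ?_)
      (summable_geometric_of_lt_one (abs_nonneg x) hxabs)
    rcases Nat.eq_zero_or_pos n with h | h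
    · simp [h, hf0, pow_nonneg (abs_nonneg x)]
    · have : ‖f n‖ = |x| ^ n / n := by
        simp [hf, abs_div, abs_mul, abs_pow, abs_neg]
      rw [this]
      apply div_le_of_le_mul₀ (by positivity) (by positivity)
      nlinarith [pow_nonneg (abs_nonneg x) n, (Nat.one_le_cast.2 h : (1:ℝ) ≤ n)]
  have hgnorm : Summable fun n => ‖g n‖ := by
    simpa [hg, abs_pow] using summable_geometric_of_lt_one (abs_nonneg x) hxabs
  have hc : HasSum (fun n ↦ ∑ k ∈ Finset.range (n + 1), f k * g (n - k))
      (Real.log (1 + x) * (1 - x)⁻¹) := by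
    have := hasSum_sum_range_mul_of_summable_norm hfnorm hgnorm
    rwa [hfs.tsum_eq, hgs.tsum_eq] at this
  have hterm : ∀ n : ℕ, ∑ k ∈ Finset.range (n + 1 + 1), f k * g (n + 1 - k)
      = (∑ k ∈ Finset.Icc 1 (n + 1), (-1 : ℝ) ^ (k + 1) / (k : ℝ)) * x ^ (n + 1) := by
    intro n
    rw [Finset.sum_range_succ' (fun k => f k * g (n + 1 - k))]
    rw [hf0, ← Finset.Ico_add_one_right_eq_Icc, Finset.sum_Ico_eq_sum_range]
    simp only [Nat.add_sub_cancel, zero_mul, add_zero, Finset.sum_mul,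
      Nat.succ_sub_one]
    apply Finset.sum_congr rfl
    intro i hi
    simp only [Finset.mem_range] at hi
    have h1 : n + 1 - (i + 1) = n - i := by omega
    rw [h1]
    have hxpow : x ^ (i + 1) * x ^ (n - i) = x ^ (n + 1) := by
      rw [← pow_add]; congr 1; omega
    simp only [hf, hg, add_comm 1 i]
    push_cast
    rw [div_mul_eq_mul_div, div_mul_eq_mul_div, mul_assoc, hxpow]
  have hshift : HasSum (fun n : ℕ => ∑ k ∈ Finset.range (n + 1 + 1), f k * g (n + 1 - k))
      (Real.log (1 + x) * (1 - x)⁻¹) := by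
    refine (hasSum_nat_add_iff (f := fun n => ∑ k ∈ Finset.range (n + 1), f k * g (n - k)) 1).2 ?_
    simpa [hf0] using hc
  have hc' : HasSum
      (fun n : ℕ => (∑ k ∈ Finset.Icc 1 (n + 1), (-1 : ℝ) ^ (k + 1) / (k : ℝ)) * x ^ (n + 1))
      (Real.log (1 + x) * (1 - x)⁻¹) :=
    hshift.congr_fun fun n => (hterm n).symm
  rw [hc'.tsum_eq, div_eq_mul_inv]
end

section
/- The sum ∑_{n=1}^∞ (-1)^{n+1} H'_n/(n(n+1)) equals (log 2)². -/
open Filter Real Topology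

private noncomputable def gg (m : ℕ) : ℝ := ∑ k ∈ Finset.Icc 1 m, (-1 : ℝ) ^ (k + 1) / k

private lemma gg_zero : gg 0 = 0 := by simp [gg]

private lemma gg_succ (m : ℕ) : gg (m + 1) = gg m + (-1 : ℝ) ^ (m + 2) / (m + 1) := by
  rw [gg, gg, Finset.sum_Icc_succ_top (by omega)]
  push_cast
  ring

private lemma gg_odd (k : ℕ) : gg (2 * k + 1) = gg (2 * k) + 1 / (2 * k + 1) := by
  rw [gg_succ]
  have : ((-1 : ℝ)) ^ (2 * k + 2) = 1 := by
    simp [pow_add, pow_mul]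
  rw [this]
  push_cast
  ring

private lemma gg_bounds : ∀ m : ℕ, 0 ≤ gg (2 * m) ∧ gg (2 * m + 1) ≤ 1 := by
  intro m
  induction m with
  | zero => constructor <;> simp [gg_zero, gg_odd 0]
  | succ n ih =>
    have h1 : gg (2 * (n + 1)) = gg (2 * n + 1) - 1 / (2 * n + 2) := by
      have := gg_succ (2 * n + 1)
      have hs : ((-1 : ℝ)) ^ (2 * n + 1 + 2) = -1 := by
        simp [pow_add, pow_mul]
      rw [hs] at this
      rw [show 2 * (n + 1) = 2 * n + 1 + 1 by ring, this]
      push_cast; ring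
    have h2 : gg (2 * (n + 1)) ≤ gg (2 * n + 1) := by
      rw [h1]; have : (0:ℝ) < 1 / (2 * (n:ℝ) + 2) := by positivity
      linarith
    have h3 : gg (2 * n) ≤ gg (2 * (n+1)) := by
      rw [h1, gg_odd]
      have : (1:ℝ) / (2 * (n:ℝ) + 2) ≤ 1 / (2 * n + 1) := by
        apply one_div_le_one_div_of_le <;> [linarith [Nat.cast_nonneg (α := ℝ) n]; linarith]
      linarith
    constructor
    · linarith [ih.1]
    · rw [gg_odd]
      have hle := h2
      have : (1:ℝ) / (2 * ((n:ℝ)+1) + 1) ≤ 1 / (2 * (n:ℝ) + 2) := by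
        apply one_div_le_one_div_of_le <;> [linarith [Nat.cast_nonneg (α := ℝ) n]; linarith]
      have h1' := h1
      push_cast at h1' ⊢
      linarith [ih.2]

private lemma gg_nonneg (m : ℕ) : 0 ≤ gg m := by
  rcases Nat.even_or_odd m with ⟨k, hk⟩ | ⟨k, hk⟩
  · subst hk; exact (gg_bounds k).1.trans_eq (by ring_nf)
  · subst hk
    have := (gg_bounds k).1
    rw [gg_odd]
    have : (0:ℝ) ≤ 1 / (2 * (k:ℝ) + 1) := by positivity
    linarith [(gg_bounds k).1]

private lemma gg_le_one (m : ℕ) : gg m ≤ 1 := by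
  rcases Nat.even_or_odd m with ⟨k, hk⟩ | ⟨k, hk⟩
  · subst hk
    have h := (gg_bounds k).2
    have := gg_odd k
    have hpos : (0:ℝ) ≤ 1 / (2 * (k:ℝ) + 1) := by positivity
    have : gg (k + k) = gg (2 * k) := by ring_nf
    rw [this]
    linarith [gg_odd k]
  · subst hk
    have := (gg_bounds k).2
    linarith

private lemma gg_even_eq (n : ℕ) : gg (2 * n) = (harmonic (2 * n) : ℝ) - (harmonic n : ℝ) := by
  induction n with
  | zero => simp [gg_zero]
  | succ n ih =>
    have h1 : gg (2 * (n + 1)) = gg (2 * n) + 1 / (2 * n + 1) - 1 / (2 * n + 2) := by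
      have hstep := gg_succ (2 * n + 1)
      have hs : ((-1 : ℝ)) ^ (2 * n + 1 + 2) = -1 := by simp [pow_add, pow_mul]
      rw [hs] at hstep
      rw [show 2 * (n + 1) = 2 * n + 1 + 1 by ring, hstep, gg_odd]
      push_cast; ring
    rw [h1, ih]
    have h2 : harmonic (2 * (n + 1)) = harmonic (2 * n) + 1 / (2 * n + 1) + 1 / (2 * n + 2) := by
      rw [show 2 * (n + 1) = (2 * n + 1) + 1 by ring, harmonic_succ, harmonic_succ]
      push_cast; ring
    rw [h2, harmonic_succ]
    push_cast
    have hx : (2 * (n:ℝ) + 2) ≠ 0 := by positivity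
    have hy : ((n:ℝ) + 1) ≠ 0 := by positivity
    field_simp
    ring

private lemma tendsto_two_mul : Tendsto (fun n : ℕ => 2 * n) atTop atTop :=
  tendsto_atTop_mono (fun n : ℕ => by simp [two_mul] : ∀ n : ℕ, n ≤ 2 * n) tendsto_id

private lemma tendsto_gg_even : Tendsto (fun n : ℕ => gg (2 * n)) atTop (𝓝 (Real.log 2)) := by
  have h1 := tendsto_harmonic_sub_log
  have h2 := h1.comp tendsto_two_mul
  have h3 := (h2.sub h1).add (tendsto_const_nhds (x := Real.log 2))
  rw [sub_self, zero_add] at h3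
  apply h3.congr'
  filter_upwards [eventually_ge_atTop 1] with n hn
  have hn0 : (n:ℝ) ≠ 0 := Nat.cast_ne_zero.2 (by omega)
  simp only [Function.comp_apply]
  rw [gg_even_eq]
  push_cast
  rw [Real.log_mul two_ne_zero hn0]
  ring

private lemma tendsto_gg_odd : Tendsto (fun n : ℕ => gg (2 * n + 1)) atTop (𝓝 (Real.log 2)) := by
  have h0 : Tendsto (fun n : ℕ => 1 / (2 * (n:ℝ) + 1)) atTop (𝓝 0) := by
    have := (tendsto_one_div_add_atTop_nhds_zero_nat :
      Tendsto (fun n : ℕ => 1 / ((n : ℝ) + 1)) atTop (𝓝 0)).comp tendsto_two_mul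
    apply this.congr
    intro n
    simp only [Function.comp_apply]
    push_cast
    ring_nf
  have := tendsto_gg_even.add h0
  rw [add_zero] at this
  apply this.congr
  intro n
  rw [gg_odd]

private lemma tendsto_gg : Tendsto gg atTop (𝓝 (Real.log 2)) := by
  have hdiv : Tendsto (fun m : ℕ => m / 2) atTop atTop :=
    tendsto_atTop_atTop.mpr fun b => ⟨2 * b, fun a ha => by omega⟩
  have hlo : Tendsto (fun m : ℕ => gg (2 * (m / 2))) atTop (𝓝 (Real.log 2)) :=
    tendsto_gg_even.comp hdiv
  have hhi : Tendsto (fun m : ℕ => gg (2 * (m / 2) + 1)) atTop (𝓝 (Real.log 2)) :=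
    tendsto_gg_odd.comp hdiv
  refine tendsto_of_tendsto_of_tendsto_of_le_of_le hlo hhi ?_ ?_
  · intro m
    rcases Nat.even_or_odd m with ⟨k, hk⟩ | ⟨k, hk⟩
    · have : m / 2 = k := by omega
      show gg (2*(m/2)) ≤ gg m
      rw [this, show m = 2 * k by omega]
    · have : m / 2 = k := by omega
      show gg (2*(m/2)) ≤ gg m
      rw [this, show m = 2 * k + 1 by omega, gg_odd]
      have : (0:ℝ) ≤ 1 / (2 * (k:ℝ) + 1) := by positivity
      linarith
  · intro m
    rcases Nat.even_or_odd m with ⟨k, hk⟩ | ⟨k, hk⟩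
    · have : m / 2 = k := by omega
      show gg m ≤ gg (2*(m/2)+1)
      rw [this, show m = 2 * k by omega, gg_odd]
      have : (0:ℝ) ≤ 1 / (2 * (k:ℝ) + 1) := by positivity
      linarith
    · have : m / 2 = k := by omega
      show gg m ≤ gg (2*(m/2)+1)
      rw [this, show m = 2 * k + 1 by omega]

private lemma partial_sum_eq (N : ℕ) :
    ∑ n ∈ Finset.range N, (-1 : ℝ) ^ (n + 2) * gg (n + 1) / ((n + 1) * ((n + 1) + 1))
      = gg N * gg (N + 1) := by
  induction N with
  | zero => simp [gg_zero]
  | succ N ih =>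
    rw [Finset.sum_range_succ, ih]
    have hx : ((N:ℝ) + 1) ≠ 0 := by positivity
    have hy : ((N:ℝ) + 1 + 1) ≠ 0 := by positivity
    rw [gg_succ (N + 1), gg_succ N]
    have hp : ((-1 : ℝ)) ^ (N + 1 + 2) = -(-1 : ℝ) ^ (N + 2) := by
      rw [pow_succ (-1 : ℝ) (N + 2)]; ring
    rw [hp]
    push_cast
    field_simp
    ring

theorem alt_harmonic_sum_div_mul :
    ∑' n : ℕ, (-1 : ℝ) ^ (n + 2) *
        (∑ k ∈ Finset.Icc 1 (n + 1), (-1 : ℝ) ^ (k + 1) / k) / ((n + 1) * ((n + 1) + 1))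
      = Real.log 2 ^ 2 := by
  have hb2 : Summable (fun n : ℕ => 1 / ((n : ℝ) + 1) ^ 2) := by
    have h0 : Summable (fun n : ℕ => 1 / (n : ℝ) ^ 2) :=
      Real.summable_one_div_nat_pow.mpr one_lt_two
    have := (summable_nat_add_iff (f := fun n : ℕ => 1 / (n : ℝ) ^ 2) 1).mpr h0
    apply this.congr
    intro n
    push_cast
    ring
  have hsummable : Summable (fun n : ℕ =>
      (-1 : ℝ) ^ (n + 2) * gg (n + 1) / (((n : ℝ) + 1) * ((n + 1) + 1))) := by
    apply Summable.of_norm_bounded hb2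
    intro n
    have hx : (0:ℝ) < (n : ℝ) + 1 := by positivity
    have hy : (0:ℝ) < (n : ℝ) + 1 + 1 := by linarith
    rw [Real.norm_eq_abs, abs_div, abs_mul, abs_pow, abs_neg, abs_one, one_pow, one_mul,
      abs_of_pos (by positivity : (0:ℝ) < ((n:ℝ)+1) * ((n+1)+1))]
    rw [div_le_div_iff₀ (by positivity) (by positivity)]
    have h1 : |gg (n + 1)| ≤ 1 := abs_le.mpr ⟨by linarith [gg_nonneg (n+1)], gg_le_one (n+1)⟩
    have h2 : ((n:ℝ) + 1) ^ 2 ≤ ((n:ℝ) + 1) * ((n + 1) + 1) := by nlinarith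
    calc |gg (n + 1)| * ((n:ℝ)+1)^2 ≤ 1 * (((n:ℝ)+1) * ((n+1)+1)) := by
            apply mul_le_mul h1 h2 (by positivity) zero_le_one
      _ = 1 * (((n:ℝ)+1) * ((n+1)+1)) := rfl
  have htend := hsummable.hasSum.tendsto_sum_nat
  have htend2 : Tendsto (fun N : ℕ => gg N * gg (N + 1)) atTop
      (𝓝 (∑' n : ℕ, (-1 : ℝ) ^ (n + 2) * gg (n + 1) / (((n : ℝ) + 1) * ((n + 1) + 1)))) := by
    apply htend.congr
    intro N
    exact partial_sum_eq N
  have hlim : Tendsto (fun N : ℕ => gg N * gg (N + 1)) atTop (𝓝 (Real.log 2 * Real.log 2)) :=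
    tendsto_gg.mul (tendsto_gg.comp (tendsto_add_atTop_nat 1))
  have := tendsto_nhds_unique htend2 hlim
  rw [← sq] at this
  exact this
end

section
/- For real x with |x| < 1/4, the sum over n ≥ 1 of H_n · C(2n,n) · x^n equals (2/√(1-4x)) · log((1+√(1-4x))/(2√(1-4x))). -/
open Real Finset

namespace CBH

noncomputable section

/-- central binomial coefficient as a real number -/
def c (n : ℕ) : ℝ := ((2 * n).choose n : ℝ)

/-- harmonic number -/
def H (n : ℕ) : ℝ := ∑ k ∈ Finset.Icc 1 n, (1 : ℝ) / k

lemma c_zero : c 0 = 1 := by simp [c]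

lemma c_one : c 1 = 2 := by norm_num [c]

lemma H_zero : H 0 = 0 := by simp [H]

lemma c_nonneg (n : ℕ) : 0 ≤ c n := Nat.cast_nonneg _

lemma H_nonneg (n : ℕ) : 0 ≤ H n := by
  apply Finset.sum_nonneg; intro k _; positivity

lemma crec (n : ℕ) : ((n : ℝ) + 1) * c (n + 1) = (4 * n + 2) * c n := by
  have h := Nat.succ_mul_centralBinom_succ n
  have h2 := congrArg (Nat.cast : ℕ → ℝ) h
  push_cast [Nat.centralBinom] at h2
  unfold c
  push_cast
  linarith [h2]

lemma Hrec (n : ℕ) : H (n + 1) = H n + 1 / ((n : ℝ) + 1) := by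
  unfold H
  rw [Finset.sum_Icc_succ_top (by omega : 1 ≤ n + 1)]
  push_cast
  ring

lemma c_le (n : ℕ) : c n ≤ 4 ^ n := by
  induction n with
  | zero => simp [c_zero]
  | succ n ih =>
    have h := crec n
    have hn : (0:ℝ) < (n:ℝ) + 1 := by positivity
    have hc : 0 ≤ c n := c_nonneg n
    have : ((n:ℝ) + 1) * c (n + 1) ≤ ((n:ℝ) + 1) * (4 * 4 ^ n) := by
      rw [h]
      have h4 : (4 * (n:ℝ) + 2) ≤ 4 * ((n:ℝ)+1) := by linarith
      calc (4 * (n:ℝ) + 2) * c n ≤ 4 * ((n:ℝ)+1) * c n := by nlinarith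
        _ ≤ 4 * ((n:ℝ)+1) * 4 ^ n := by nlinarith [pow_nonneg (by norm_num : (0:ℝ) ≤ 4) n]
        _ = ((n:ℝ) + 1) * (4 * 4 ^ n) := by ring
    have := le_of_mul_le_mul_left (by linarith : ((n:ℝ)+1) * c (n+1) ≤ ((n:ℝ)+1) * (4 * 4^n)) hn
    calc c (n+1) ≤ 4 * 4 ^ n := this
      _ = 4 ^ (n+1) := by ring

lemma H_le (n : ℕ) : H n ≤ n := by
  induction n with
  | zero => simp [H_zero]
  | succ n ih =>
    rw [Hrec]
    push_cast
    have : 1 / ((n:ℝ) + 1) ≤ 1 := by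
      rw [div_le_one (by positivity)]; linarith [Nat.cast_nonneg (α := ℝ) n]
    linarith

/-- summability of `(n+1)^k * t^n` -/
lemma summable_pow_succ_geom (k : ℕ) {t : ℝ} (ht0 : 0 ≤ t) (ht : t < 1) :
    Summable (fun n : ℕ => ((n : ℝ) + 1) ^ k * t ^ n) := by
  have hkey : ∀ n : ℕ, ((n : ℝ) + 1) ^ k ≤ 2 ^ k * ((n:ℝ) ^ k + 1) := by
    intro n
    rcases Nat.eq_zero_or_pos n with h | h
    · subst h
      simp
      calc (1:ℝ) ≤ 2 ^ k := one_le_pow₀ (by norm_num)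
        _ ≤ 2 ^ k * (0 ^ k + 1) := by
            nlinarith [pow_nonneg (by norm_num : (0:ℝ) ≤ 2) k, pow_nonneg (le_refl (0:ℝ)) k]
    · have h1 : (1:ℝ) ≤ (n:ℝ) := by exact_mod_cast h
      calc ((n:ℝ) + 1) ^ k ≤ (2 * (n:ℝ)) ^ k := by
            apply pow_le_pow_left₀ (by linarith) (by linarith)
        _ = 2 ^ k * (n:ℝ) ^ k := by rw [mul_pow]
        _ ≤ 2 ^ k * ((n:ℝ) ^ k + 1) := by
            nlinarith [pow_nonneg (by norm_num : (0:ℝ) ≤ 2) k]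
  have ht' : ‖t‖ < 1 := by rwa [Real.norm_eq_abs, abs_of_nonneg ht0]
  have hs1 : Summable (fun n : ℕ => 2 ^ k * ((n:ℝ) ^ k * t ^ n)) :=
    (summable_pow_mul_geometric_of_norm_lt_one k ht').mul_left _
  have hs2 : Summable (fun n : ℕ => 2 ^ k * t ^ n) :=
    (summable_geometric_of_lt_one ht0 ht).mul_left _
  apply Summable.of_nonneg_of_le (fun n => by positivity)
    (f := fun n : ℕ => 2 ^ k * ((n:ℝ) ^ k * t ^ n) + 2 ^ k * t ^ n)
  · intro n
    have := hkey n
    have htn : 0 ≤ t ^ n := pow_nonneg ht0 n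
    nlinarith
  · exact hs1.add hs2

/-- master summability lemma for power series with coefficients bounded by `C (n+1)^4 4^n` -/
lemma summable_aux {a : ℕ → ℝ} {C : ℝ}
    (hb : ∀ n, |a n| ≤ C * ((n : ℝ) + 1) ^ 4 * 4 ^ n) {y : ℝ} (hy : |y| < 1 / 4) :
    Summable (fun n => a n * y ^ n) := by
  have h4y0 : 0 ≤ 4 * |y| := by positivity
  have h4y : 4 * |y| < 1 := by linarith
  apply Summable.of_norm
  apply Summable.of_nonneg_of_le (fun n => norm_nonneg _)
    (f := fun n : ℕ => C * (((n:ℝ) + 1) ^ 4 * (4 * |y|) ^ n))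
  · intro n
    have h1 : ‖a n * y ^ n‖ = |a n| * |y| ^ n := by
      rw [norm_mul, Real.norm_eq_abs, Real.norm_eq_abs, abs_pow]
    rw [h1]
    have h2 : |a n| * |y| ^ n ≤ (C * ((n:ℝ)+1)^4 * 4 ^ n) * |y| ^ n := by
      apply mul_le_mul_of_nonneg_right (hb n) (by positivity)
    calc |a n| * |y| ^ n ≤ (C * ((n:ℝ)+1)^4 * 4 ^ n) * |y| ^ n := h2
      _ = C * (((n:ℝ)+1)^4 * (4 * |y|) ^ n) := by rw [mul_pow]; ring
  · exact (summable_pow_succ_geom 4 h4y0 h4y).mul_left C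

lemma C_nonneg {a : ℕ → ℝ} {C : ℝ}
    (hb : ∀ n, |a n| ≤ C * ((n : ℝ) + 1) ^ 4 * 4 ^ n) : 0 ≤ C := by
  have := hb 0
  simp at this
  exact le_trans (abs_nonneg _) this

/-- master term-by-term differentiation lemma -/
lemma hasDerivAt_aux {a : ℕ → ℝ} {C : ℝ}
    (hb : ∀ n, |a n| ≤ C * ((n : ℝ) + 1) ^ 4 * 4 ^ n) {x : ℝ} (hx : |x| < 1 / 4) :
    HasDerivAt (fun y => ∑' n, a n * y ^ n)
      (∑' n : ℕ, ((n : ℝ) + 1) * a (n + 1) * x ^ n) x := by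
  have hC : 0 ≤ C := C_nonneg hb
  set r : ℝ := (|x| + 1/4) / 2 with hr_def
  have hr0 : 0 < r := by positivity
  have hxr : |x| < r := by rw [hr_def]; linarith
  have hr4 : r < 1/4 := by rw [hr_def]; linarith
  have h4r0 : 0 ≤ 4 * r := by positivity
  have h4r : 4 * r < 1 := by linarith
  set t : Set ℝ := Set.Ioo (-r) r with ht_def
  have ht_open : IsOpen t := isOpen_Ioo
  have ht_conn : IsPreconnected t := (convex_Ioo _ _).isPreconnected
  have hxt : x ∈ t := by rw [ht_def]; exact abs_lt.mp hxr
  have h0t : (0 : ℝ) ∈ t := by rw [ht_def]; exact Set.mem_Ioo.mpr ⟨by linarith, hr0⟩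
  -- the bound for the derivative terms
  set u : ℕ → ℝ := fun n => (C / r) * (((n:ℝ) + 1) ^ 5 * (4 * r) ^ n) with hu_def
  have hu : Summable u := (summable_pow_succ_geom 5 h4r0 h4r).mul_left _
  -- derivative of each term
  have hg : ∀ (n : ℕ) (y : ℝ), y ∈ t →
      HasDerivAt (fun z => a n * z ^ n) (a n * ((n:ℝ) * y ^ (n - 1))) y := by
    intro n y _
    exact (hasDerivAt_pow n y).const_mul (a n)
  have hg' : ∀ (n : ℕ) (y : ℝ), y ∈ t → ‖a n * ((n:ℝ) * y ^ (n - 1))‖ ≤ u n := by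
    intro n y hy
    have hyr : |y| ≤ r := by
      rw [ht_def] at hy
      rw [abs_le]; exact ⟨le_of_lt hy.1, le_of_lt hy.2⟩
    match n with
    | 0 => simp [hu_def]; exact div_nonneg hC (le_of_lt hr0)
    | (m+1) =>
      simp only [Nat.add_sub_cancel, Nat.cast_add, Nat.cast_one]
      have h1 : ‖a (m+1) * (((m:ℝ)+1) * y ^ m)‖ = |a (m+1)| * (((m:ℝ)+1) * |y| ^ m) := by
        rw [norm_mul, norm_mul, Real.norm_eq_abs, Real.norm_eq_abs, Real.norm_eq_abs,
          abs_pow, abs_of_nonneg (show (0:ℝ) ≤ (m:ℝ)+1 by positivity)]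
      have h2 : |y| ^ m ≤ r ^ m := pow_le_pow_left₀ (abs_nonneg y) hyr m
      have hbm := hb (m+1)
      have hmc : ((m:ℕ) + 1 : ℝ) = (m:ℝ) + 1 := by push_cast; ring
      rw [h1]
      have key : |a (m+1)| * (((m:ℝ)+1) * |y| ^ m)
          ≤ (C * ((m:ℝ)+2)^4 * 4 ^ (m+1)) * (((m:ℝ)+1) * r ^ m) := by
        apply mul_le_mul
        · calc |a (m+1)| ≤ C * (((m+1:ℕ):ℝ)+1)^4 * 4 ^ (m+1) := hbm
            _ = C * ((m:ℝ)+2)^4 * 4^(m+1) := by push_cast; ring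
        · apply mul_le_mul_of_nonneg_left h2 (by positivity)
        · positivity
        · positivity
      calc |a (m+1)| * (((m:ℝ)+1) * |y| ^ m)
          ≤ (C * ((m:ℝ)+2)^4 * 4 ^ (m+1)) * (((m:ℝ)+1) * r ^ m) := key
        _ ≤ (C / r) * (((m:ℝ)+2) ^ 5 * (4 * r) ^ (m+1)) := by
            rw [mul_pow]
            have hrm : (0:ℝ) ≤ r ^ m := by positivity
            have h12 : ((m:ℝ)+1) ≤ ((m:ℝ)+2) := by linarith [Nat.cast_nonneg (α := ℝ) m]
            have hpow : (0:ℝ) ≤ ((m:ℝ)+2)^4 := by positivity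
            have : (C * ((m:ℝ)+2)^4 * 4 ^ (m+1)) * (((m:ℝ)+1) * r ^ m)
                ≤ (C * ((m:ℝ)+2)^4 * 4 ^ (m+1)) * (((m:ℝ)+2) * r ^ m) := by
              apply mul_le_mul_of_nonneg_left _ (by positivity)
              exact mul_le_mul_of_nonneg_right h12 hrm
            calc (C * ((m:ℝ)+2)^4 * 4 ^ (m+1)) * (((m:ℝ)+1) * r ^ m)
                ≤ (C * ((m:ℝ)+2)^4 * 4 ^ (m+1)) * (((m:ℝ)+2) * r ^ m) := this
              _ = (C / r) * (((m:ℝ)+2) ^ 5 * (4 ^ (m+1) * r ^ (m+1))) := by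
                  rw [pow_succ]
                  field_simp
                  ring
        _ = u (m+1) := by rw [hu_def]; push_cast; ring_nf
  have hg0 : Summable (fun n => a n * (0:ℝ) ^ n) :=
    summable_aux hb (by norm_num)
  have hder := hasDerivAt_tsum_of_isPreconnected hu ht_open ht_conn hg hg' h0t hg0 hxt
  -- now rewrite the derivative sum
  have hsum' : Summable (fun n => a n * ((n:ℝ) * x ^ (n - 1))) :=
    Summable.of_norm_bounded hu (fun n => hg' n x hxt)
  have heq : ∑' n, a n * ((n:ℝ) * x ^ (n - 1)) = ∑' n : ℕ, ((n:ℝ) + 1) * a (n + 1) * x ^ n := by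
    rw [Summable.tsum_eq_zero_add hsum']
    simp only [Nat.cast_zero, zero_mul, mul_zero, zero_add]
    apply tsum_congr
    intro n
    push_cast
    ring_nf
  rw [heq] at hder
  exact hder

/-! ### The generating functions -/

def u (y : ℝ) : ℝ := ∑' n : ℕ, c n * y ^ n
def u1 (y : ℝ) : ℝ := ∑' n : ℕ, ((n : ℝ) + 1) * c (n + 1) * y ^ n
def A (y : ℝ) : ℝ := ∑' n : ℕ, (H n * c n) * y ^ n
def A1 (y : ℝ) : ℝ := ∑' n : ℕ, ((n : ℝ) + 1) * (H (n + 1) * c (n + 1)) * y ^ n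
def w (y : ℝ) : ℝ := ∑' n : ℕ, c (n + 1) * y ^ n
def R (y : ℝ) : ℝ := 2 / Real.sqrt (1 - 4 * y) *
  Real.log ((1 + Real.sqrt (1 - 4 * y)) / (2 * Real.sqrt (1 - 4 * y)))

lemma one_le_pow_cast (n k : ℕ) : (1:ℝ) ≤ ((n:ℝ) + 1) ^ k :=
  one_le_pow₀ (by linarith [Nat.cast_nonneg (α := ℝ) n])

lemma le_pow4 (n : ℕ) : ((n:ℝ) + 1) ≤ ((n:ℝ) + 1) ^ 4 :=
  le_self_pow₀ (by linarith [Nat.cast_nonneg (α := ℝ) n]) (by norm_num)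

lemma sq_le_pow4 (n : ℕ) : ((n:ℝ) + 1) ^ 2 ≤ ((n:ℝ) + 1) ^ 4 :=
  pow_le_pow_right₀ (by linarith [Nat.cast_nonneg (α := ℝ) n]) (by norm_num)

lemma hb_c : ∀ n : ℕ, |c n| ≤ 1 * ((n : ℝ) + 1) ^ 4 * 4 ^ n := by
  intro n
  rw [abs_of_nonneg (c_nonneg n), one_mul]
  have h1 := one_le_pow_cast n 4
  have h2 := c_le n
  nlinarith [pow_nonneg (by norm_num : (0:ℝ) ≤ 4) n]

lemma hb_hc : ∀ n : ℕ, |H n * c n| ≤ 1 * ((n : ℝ) + 1) ^ 4 * 4 ^ n := by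
  intro n
  rw [abs_of_nonneg (mul_nonneg (H_nonneg n) (c_nonneg n)), one_mul]
  have h1 := H_le n
  have h2 := c_le n
  have h3 := le_pow4 n
  have h4 := H_nonneg n
  have h5 := c_nonneg n
  have h6 : H n * c n ≤ ((n:ℝ) + 1) * 4 ^ n := by
    apply mul_le_mul (by linarith) h2 h5 (by linarith [Nat.cast_nonneg (α := ℝ) n])
  calc H n * c n ≤ ((n:ℝ) + 1) * 4 ^ n := h6
    _ ≤ ((n:ℝ) + 1) ^ 4 * 4 ^ n := by
        apply mul_le_mul_of_nonneg_right h3 (by positivity)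

lemma hb_w : ∀ n : ℕ, |c (n + 1)| ≤ 4 * ((n : ℝ) + 1) ^ 4 * 4 ^ n := by
  intro n
  rw [abs_of_nonneg (c_nonneg _)]
  have h2 := c_le (n + 1)
  have h1 := one_le_pow_cast n 4
  calc c (n+1) ≤ 4 ^ (n+1) := h2
    _ = 4 * 4 ^ n := by ring
    _ ≤ 4 * ((n:ℝ)+1)^4 * 4 ^ n := by nlinarith [pow_nonneg (by norm_num : (0:ℝ) ≤ 4) n]

lemma hb_u1 : ∀ n : ℕ, |((n : ℝ) + 1) * c (n + 1)| ≤ 4 * ((n : ℝ) + 1) ^ 4 * 4 ^ n := by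
  intro n
  have hn0 : (0:ℝ) ≤ (n:ℝ) + 1 := by positivity
  rw [abs_of_nonneg (mul_nonneg hn0 (c_nonneg _))]
  have h2 := c_le (n + 1)
  have h3 := le_pow4 n
  have h4 : (4:ℝ) ^ (n+1) = 4 * 4 ^ n := by ring
  calc ((n:ℝ)+1) * c (n+1) ≤ ((n:ℝ)+1) * 4 ^ (n+1) := by
        apply mul_le_mul_of_nonneg_left h2 hn0
    _ = 4 * (((n:ℝ)+1) * 4 ^ n) := by rw [h4]; ring
    _ ≤ 4 * (((n:ℝ)+1)^4 * 4 ^ n) := by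
        have := mul_le_mul_of_nonneg_right h3 (pow_nonneg (by norm_num : (0:ℝ) ≤ 4) n)
        linarith
    _ = 4 * ((n:ℝ)+1)^4 * 4 ^ n := by ring

lemma hb_A1 : ∀ n : ℕ, |((n : ℝ) + 1) * (H (n + 1) * c (n + 1))| ≤ 4 * ((n : ℝ) + 1) ^ 4 * 4 ^ n := by
  intro n
  have hn0 : (0:ℝ) ≤ (n:ℝ) + 1 := by positivity
  rw [abs_of_nonneg (mul_nonneg hn0 (mul_nonneg (H_nonneg _) (c_nonneg _)))]
  have h2 := c_le (n + 1)
  have hH : H (n+1) ≤ (n:ℝ) + 1 := by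
    have := H_le (n+1); push_cast at this; linarith
  have h3 := sq_le_pow4 n
  have hc0 := c_nonneg (n+1)
  have hH0 := H_nonneg (n+1)
  have step1 : H (n+1) * c (n+1) ≤ ((n:ℝ)+1) * 4 ^ (n+1) := by
    apply mul_le_mul hH h2 hc0 hn0
  calc ((n:ℝ)+1) * (H (n+1) * c (n+1)) ≤ ((n:ℝ)+1) * (((n:ℝ)+1) * 4 ^ (n+1)) := by
        apply mul_le_mul_of_nonneg_left step1 hn0
    _ = 4 * (((n:ℝ)+1)^2 * 4 ^ n) := by ring
    _ ≤ 4 * (((n:ℝ)+1)^4 * 4 ^ n) := by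
        have := mul_le_mul_of_nonneg_right h3 (pow_nonneg (by norm_num : (0:ℝ) ≤ 4) n)
        linarith
    _ = 4 * ((n:ℝ)+1)^4 * 4 ^ n := by ring

/-! ### ODE for u -/

lemma u_ode {y : ℝ} (hy : |y| < 1 / 4) : (1 - 4 * y) * u1 y = 2 * u y := by
  have h1 : HasSum (fun n : ℕ => ((n : ℝ) + 1) * c (n + 1) * y ^ n) (u1 y) :=
    (summable_aux hb_u1 hy).hasSum
  have h2 : HasSum (fun n : ℕ => c n * y ^ n) (u y) := (summable_aux hb_c hy).hasSum
  have h3 : HasSum (fun n : ℕ => y * (((n : ℝ) + 1) * c (n + 1) * y ^ n)) (y * u1 y) :=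
    h1.mul_left y
  have h4 : HasSum (fun n : ℕ => (((n + 1 : ℕ) : ℝ)) * c (n + 1) * y ^ (n + 1)) (y * u1 y) := by
    have heq : (fun n : ℕ => (((n + 1 : ℕ) : ℝ)) * c (n + 1) * y ^ (n + 1))
        = (fun n : ℕ => y * (((n : ℝ) + 1) * c (n + 1) * y ^ n)) := by
      funext n; push_cast; ring
    rw [heq]; exact h3
  have h5 : HasSum (fun m : ℕ => (m : ℝ) * c m * y ^ m) (y * u1 y) := by
    have := (hasSum_nat_add_iff (f := fun m : ℕ => (m : ℝ) * c m * y ^ m) 1).1 h4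
    simpa using this
  have h6 : HasSum (fun n : ℕ => 4 * ((n : ℝ) * c n * y ^ n) + 2 * (c n * y ^ n))
      (4 * (y * u1 y) + 2 * u y) := (h5.mul_left 4).add (h2.mul_left 2)
  have h7 : (fun n : ℕ => ((n : ℝ) + 1) * c (n + 1) * y ^ n)
      = (fun n : ℕ => 4 * ((n : ℝ) * c n * y ^ n) + 2 * (c n * y ^ n)) := by
    funext n
    have hr := crec n
    calc ((n : ℝ) + 1) * c (n + 1) * y ^ n = (((n : ℝ) + 1) * c (n + 1)) * y ^ n := by ring
      _ = ((4 * (n:ℝ) + 2) * c n) * y ^ n := by rw [hr]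
      _ = 4 * ((n : ℝ) * c n * y ^ n) + 2 * (c n * y ^ n) := by ring
  rw [h7] at h1
  have := h1.unique h6
  linarith

lemma u_zero : u 0 = 1 := by
  have h : HasSum (fun n : ℕ => c n * (0:ℝ) ^ n) (c 0 * (0:ℝ) ^ 0) := by
    apply hasSum_single 0
    intro b hb
    simp [zero_pow hb]
  have := h.tsum_eq
  unfold u
  rw [this, c_zero]
  norm_num

lemma u_closed {x : ℝ} (hx : |x| < 1 / 4) : u x * Real.sqrt (1 - 4 * x) = 1 := by
  set s : Set ℝ := Set.Ioo (-(1/4) : ℝ) (1/4) with hs_def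
  have hconv : Convex ℝ s := convex_Ioo _ _
  have hxs : x ∈ s := by rw [hs_def]; exact abs_lt.mp hx
  have h0s : (0:ℝ) ∈ s := by rw [hs_def]; constructor <;> norm_num
  set φ : ℝ → ℝ := fun z => u z * Real.sqrt (1 - 4 * z) with hφ_def
  have hder : ∀ z ∈ s, HasDerivWithinAt φ ((fun _ => (0:ℝ)) z) s z := by
    intro z hz
    have hz' : |z| < 1/4 := by
      rw [hs_def] at hz; exact abs_lt.mpr ⟨hz.1, hz.2⟩
    have hpos : 0 < 1 - 4 * z := by
      have := abs_lt.mp hz'; linarith [this.2]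
    set S := Real.sqrt (1 - 4 * z) with hS_def
    have hS : 0 < S := Real.sqrt_pos.mpr hpos
    have hSne : S ≠ 0 := ne_of_gt hS
    have hS2 : S ^ 2 = 1 - 4 * z := Real.sq_sqrt hpos.le
    have hSd : HasDerivAt (fun t : ℝ => Real.sqrt (1 - 4 * t)) (-4 / (2 * S)) z := by
      have h0 : HasDerivAt (fun t : ℝ => 1 - 4 * t) (-4) z := by
        simpa using ((hasDerivAt_id z).const_mul (4:ℝ)).const_sub 1
      exact h0.sqrt (ne_of_gt hpos)
    have hu' : HasDerivAt u (u1 z) z := by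
      unfold u u1
      exact hasDerivAt_aux hb_c hz'
    have hφ' : HasDerivAt φ (u1 z * S + u z * (-4 / (2 * S))) z := hu'.mul hSd
    have hval : u1 z * S + u z * (-4 / (2 * S)) = 0 := by
      have h2 : u1 z * S + u z * (-4 / (2 * S)) = (S ^ 2 * u1 z - 2 * u z) / S := by
        field_simp; ring
      rw [h2, hS2]
      rw [u_ode hz']
      simp
    rw [hval] at hφ'
    exact hφ'.hasDerivWithinAt
  have hbound : ∀ z ∈ s, ‖(fun _ => (0:ℝ)) z‖ ≤ 0 := by intro z _; simp
  have := hconv.norm_image_sub_le_of_norm_hasDerivWithin_le hder hbound h0s hxs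
  simp only [zero_mul, norm_le_zero_iff, sub_eq_zero] at this
  have h3 : φ 0 = 1 := by
    show u 0 * Real.sqrt (1 - 4 * 0) = 1
    rw [u_zero]; norm_num
  show φ x = 1
  rw [this, h3]

lemma u_eq {x : ℝ} (hx : |x| < 1 / 4) : u x = 1 / Real.sqrt (1 - 4 * x) := by
  have hpos : 0 < 1 - 4 * x := by have := abs_lt.mp hx; linarith [this.2]
  have hS : 0 < Real.sqrt (1 - 4 * x) := Real.sqrt_pos.mpr hpos
  have := u_closed hx
  field_simp
  linarith [this]

/-! ### closed form for w -/

lemma w_closed {y : ℝ} (hy : |y| < 1 / 4) :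
    w y = 4 / (Real.sqrt (1 - 4 * y) * (1 + Real.sqrt (1 - 4 * y))) := by
  have hpos : 0 < 1 - 4 * y := by have := abs_lt.mp hy; linarith [this.2]
  set S := Real.sqrt (1 - 4 * y) with hS_def
  have hS : 0 < S := Real.sqrt_pos.mpr hpos
  have hSne : S ≠ 0 := ne_of_gt hS
  have hS2 : S ^ 2 = 1 - 4 * y := Real.sq_sqrt hpos.le
  have h1S : (0:ℝ) < 1 + S := by linarith
  by_cases hy0 : y = 0
  · subst hy0
    have h : HasSum (fun n : ℕ => c (n + 1) * (0:ℝ) ^ n) (c 1 * (0:ℝ) ^ 0) := by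
      apply hasSum_single 0
      intro b hb
      simp [zero_pow hb]
    have hw : w 0 = 2 := by
      unfold w
      rw [h.tsum_eq, c_one]
      norm_num
    rw [hw]
    have : S = 1 := by rw [hS_def]; norm_num
    rw [this]
    norm_num
  · have h3 : HasSum (fun n : ℕ => c (n + 1) * y ^ n) (w y) := (summable_aux hb_w hy).hasSum
    have h4 : HasSum (fun n : ℕ => c (n + 1) * y ^ (n + 1)) (y * w y) := by
      have heq : (fun n : ℕ => c (n + 1) * y ^ (n + 1))
          = (fun n : ℕ => y * (c (n + 1) * y ^ n)) := by funext n; ring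
      rw [heq]; exact h3.mul_left y
    have h5 : HasSum (fun m : ℕ => c m * y ^ m) (y * w y + 1) := by
      have := (hasSum_nat_add_iff (f := fun m : ℕ => c m * y ^ m) 1).1 h4
      simpa [c_zero] using this
    have h2 : HasSum (fun n : ℕ => c n * y ^ n) (u y) := (summable_aux hb_c hy).hasSum
    have huy : u y = y * w y + 1 := h2.unique h5
    have hu2 := u_eq hy
    rw [hu2] at huy
    -- 1/S = y * w y + 1, so w y = (1 - S)/(S y) = 4/(S(1+S))
    have key : y * w y = y * (4 / (S * (1 + S))) := by
      have expand : y * (4 / (S * (1 + S))) = 4 * y / (S * (1 + S)) := by ring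
      rw [expand]
      have h4y : 4 * y = 1 - S ^ 2 := by linarith [hS2]
      rw [h4y]
      have : (1 - S ^ 2) / (S * (1 + S)) = (1 - S) / S := by
        rw [div_eq_div_iff (by positivity) hSne]
        ring
      rw [this]
      have : (1 - S) / S = 1 / S - 1 := by
        field_simp
      rw [this]
      linarith [huy]
    exact mul_left_cancel₀ hy0 key

/-! ### ODE for A -/

lemma A_ode {y : ℝ} (hy : |y| < 1 / 4) : (1 - 4 * y) * A1 y = 2 * A y + w y := by
  have h1 : HasSum (fun n : ℕ => ((n : ℝ) + 1) * (H (n + 1) * c (n + 1)) * y ^ n) (A1 y) :=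
    (summable_aux hb_A1 hy).hasSum
  have h2 : HasSum (fun n : ℕ => (H n * c n) * y ^ n) (A y) := (summable_aux hb_hc hy).hasSum
  have h3 : HasSum (fun n : ℕ => c (n + 1) * y ^ n) (w y) := (summable_aux hb_w hy).hasSum
  have h4 : HasSum (fun n : ℕ => (((n + 1 : ℕ) : ℝ)) * (H (n + 1) * c (n + 1)) * y ^ (n + 1))
      (y * A1 y) := by
    have heq : (fun n : ℕ => (((n + 1 : ℕ) : ℝ)) * (H (n + 1) * c (n + 1)) * y ^ (n + 1))
        = (fun n : ℕ => y * (((n : ℝ) + 1) * (H (n + 1) * c (n + 1)) * y ^ n)) := by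
      funext n; push_cast; ring
    rw [heq]; exact h1.mul_left y
  have h5 : HasSum (fun m : ℕ => (m : ℝ) * (H m * c m) * y ^ m) (y * A1 y) := by
    have := (hasSum_nat_add_iff (f := fun m : ℕ => (m : ℝ) * (H m * c m) * y ^ m) 1).1 h4
    simpa using this
  have h6 : HasSum
      (fun n : ℕ => 4 * ((n : ℝ) * (H n * c n) * y ^ n) + 2 * ((H n * c n) * y ^ n)
        + c (n + 1) * y ^ n)
      (4 * (y * A1 y) + 2 * A y + w y) := ((h5.mul_left 4).add (h2.mul_left 2)).add h3
  have h7 : (fun n : ℕ => ((n : ℝ) + 1) * (H (n + 1) * c (n + 1)) * y ^ n)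
      = (fun n : ℕ => 4 * ((n : ℝ) * (H n * c n) * y ^ n) + 2 * ((H n * c n) * y ^ n)
        + c (n + 1) * y ^ n) := by
    funext n
    have hne : ((n : ℝ) + 1) ≠ 0 := by positivity
    have hcoef : ((n : ℝ) + 1) * (H (n + 1) * c (n + 1))
        = (4 * (n:ℝ) + 2) * (H n * c n) + c (n + 1) := by
      rw [Hrec n]
      have hinv : ((n : ℝ) + 1) * (1 / ((n : ℝ) + 1)) = 1 := by field_simp
      calc ((n : ℝ) + 1) * ((H n + 1 / ((n : ℝ) + 1)) * c (n + 1))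
          = H n * (((n : ℝ) + 1) * c (n + 1))
            + (((n : ℝ) + 1) * (1 / ((n : ℝ) + 1))) * c (n + 1) := by ring
        _ = H n * ((4 * (n:ℝ) + 2) * c n) + 1 * c (n + 1) := by rw [crec n, hinv]
        _ = (4 * (n:ℝ) + 2) * (H n * c n) + c (n + 1) := by ring
    calc ((n : ℝ) + 1) * (H (n + 1) * c (n + 1)) * y ^ n
        = (((n : ℝ) + 1) * (H (n + 1) * c (n + 1))) * y ^ n := by ring
      _ = ((4 * (n:ℝ) + 2) * (H n * c n) + c (n + 1)) * y ^ n := by rw [hcoef]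
      _ = 4 * ((n : ℝ) * (H n * c n) * y ^ n) + 2 * ((H n * c n) * y ^ n)
          + c (n + 1) * y ^ n := by ring
  rw [h7] at h1
  have := h1.unique h6
  linarith

lemma A_zero : A 0 = 0 := by
  have h : HasSum (fun n : ℕ => (H n * c n) * (0:ℝ) ^ n) ((H 0 * c 0) * (0:ℝ) ^ 0) := by
    apply hasSum_single 0
    intro b hb
    simp [zero_pow hb]
  unfold A
  rw [h.tsum_eq, H_zero]
  norm_num

/-! ### ODE for R -/

lemma R_zero : R 0 = 0 := by
  unfold R
  norm_num

lemma R_deriv {y : ℝ} (hy : |y| < 1 / 4) :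
    ∃ R', HasDerivAt R R' y ∧ (1 - 4 * y) * R' = 2 * R y
      + 4 / (Real.sqrt (1 - 4 * y) * (1 + Real.sqrt (1 - 4 * y))) := by
  have hpos : 0 < 1 - 4 * y := by have := abs_lt.mp hy; linarith [this.2]
  set S := Real.sqrt (1 - 4 * y) with hS_def
  have hS : 0 < S := Real.sqrt_pos.mpr hpos
  have hSne : S ≠ 0 := ne_of_gt hS
  have hS2 : S ^ 2 = 1 - 4 * y := Real.sq_sqrt hpos.le
  have h1S : (0:ℝ) < 1 + S := by linarith
  have hSd : HasDerivAt (fun t : ℝ => Real.sqrt (1 - 4 * t)) (-4 / (2 * S)) y := by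
    have h0 : HasDerivAt (fun t : ℝ => 1 - 4 * t) (-4) y := by
      simpa using ((hasDerivAt_id y).const_mul (4:ℝ)).const_sub 1
    exact h0.sqrt (ne_of_gt hpos)
  have hnum : HasDerivAt (fun t : ℝ => 1 + Real.sqrt (1 - 4 * t)) (-4 / (2 * S)) y :=
    hSd.const_add 1
  have hden : HasDerivAt (fun t : ℝ => 2 * Real.sqrt (1 - 4 * t)) (2 * (-4 / (2 * S))) y :=
    hSd.const_mul 2
  have hden_ne : 2 * S ≠ 0 := by positivity
  have hN := hnum.div hden hden_ne
  have hNpos : 0 < (1 + S) / (2 * S) := by positivity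
  have hlog := hN.log (ne_of_gt hNpos)
  have hc2 : HasDerivAt (fun t : ℝ => 2 / Real.sqrt (1 - 4 * t))
      ((0 * S - 2 * (-4 / (2 * S))) / S ^ 2) y := (hasDerivAt_const y (2:ℝ)).div hSd hSne
  have hR := hc2.mul hlog
  refine ⟨_, hR, ?_⟩
  have hRy : R y = 2 / S * Real.log ((1 + S) / (2 * S)) := rfl
  rw [hRy]
  simp only [Pi.div_apply]
  rw [← hS_def]
  rw [← hS2]
  field_simp
  ring

/-! ### A = R -/

lemma A_eq_R {x : ℝ} (hx : |x| < 1 / 4) : A x = R x := by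
  set s : Set ℝ := Set.Ioo (-(1/4) : ℝ) (1/4) with hs_def
  have hconv : Convex ℝ s := convex_Ioo _ _
  have hxs : x ∈ s := by rw [hs_def]; exact abs_lt.mp hx
  have h0s : (0:ℝ) ∈ s := by rw [hs_def]; constructor <;> norm_num
  set φ : ℝ → ℝ := fun z => (A z - R z) * Real.sqrt (1 - 4 * z) with hφ_def
  have hder : ∀ z ∈ s, HasDerivWithinAt φ ((fun _ => (0:ℝ)) z) s z := by
    intro z hz
    have hz' : |z| < 1/4 := by
      rw [hs_def] at hz; exact abs_lt.mpr ⟨hz.1, hz.2⟩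
    have hpos : 0 < 1 - 4 * z := by
      have := abs_lt.mp hz'; linarith [this.2]
    set S := Real.sqrt (1 - 4 * z) with hS_def
    have hS : 0 < S := Real.sqrt_pos.mpr hpos
    have hSne : S ≠ 0 := ne_of_gt hS
    have hS2 : S ^ 2 = 1 - 4 * z := Real.sq_sqrt hpos.le
    have hSd : HasDerivAt (fun t : ℝ => Real.sqrt (1 - 4 * t)) (-4 / (2 * S)) z := by
      have h0 : HasDerivAt (fun t : ℝ => 1 - 4 * t) (-4) z := by
        simpa using ((hasDerivAt_id z).const_mul (4:ℝ)).const_sub 1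
      exact h0.sqrt (ne_of_gt hpos)
    have hA' : HasDerivAt A (A1 z) z := by
      unfold A A1
      exact hasDerivAt_aux hb_hc hz'
    obtain ⟨R', hRd, hRkey⟩ := R_deriv hz'
    have hAkey : (1 - 4 * z) * A1 z = 2 * A z + 4 / (S * (1 + S)) := by
      have := A_ode hz'
      rw [w_closed hz'] at this
      exact this
    rw [← hS_def] at hRkey
    have hkey : (1 - 4 * z) * (A1 z - R') = 2 * (A z - R z) := by
      linear_combination hAkey - hRkey
    have hφ' : HasDerivAt φ ((A1 z - R') * S + (A z - R z) * (-4 / (2 * S))) z :=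
      (hA'.sub hRd).mul hSd
    have hval : (A1 z - R') * S + (A z - R z) * (-4 / (2 * S)) = 0 := by
      have h2 : (A1 z - R') * S + (A z - R z) * (-4 / (2 * S))
          = (S ^ 2 * (A1 z - R') - 2 * (A z - R z)) / S := by
        field_simp; ring
      rw [h2, hS2, hkey]
      simp
    rw [hval] at hφ'
    exact hφ'.hasDerivWithinAt
  have hbound : ∀ z ∈ s, ‖(fun _ => (0:ℝ)) z‖ ≤ 0 := by intro z _; simp
  have hconst := hconv.norm_image_sub_le_of_norm_hasDerivWithin_le hder hbound h0s hxs
  simp only [zero_mul, norm_le_zero_iff, sub_eq_zero] at hconst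
  have h3 : φ 0 = 0 := by
    show (A 0 - R 0) * Real.sqrt (1 - 4 * 0) = 0
    rw [A_zero, R_zero]; norm_num
  have h4 : φ x = 0 := by rw [hconst, h3]
  have hpos : 0 < 1 - 4 * x := by have := abs_lt.mp hx; linarith [this.2]
  have hS : 0 < Real.sqrt (1 - 4 * x) := Real.sqrt_pos.mpr hpos
  have h5 : (A x - R x) * Real.sqrt (1 - 4 * x) = 0 := h4
  rcases mul_eq_zero.mp h5 with h | h
  · linarith [sub_eq_zero.mp (by linarith : A x - R x = 0)]
  · exact absurd h (ne_of_gt hS)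

end

end CBH

theorem central_binom_harmonic_gen_fun (x : ℝ) (hx : |x| < 1 / 4) :
    ∑' n : ℕ, (∑ k ∈ Finset.Icc 1 (n + 1), (1 : ℝ) / k) *
        ((2 * (n + 1)).choose (n + 1)) * x ^ (n + 1)
      = 2 / Real.sqrt (1 - 4 * x) *
          Real.log ((1 + Real.sqrt (1 - 4 * x)) / (2 * Real.sqrt (1 - 4 * x))) := by
  have hm := CBH.A_eq_R hx
  have hsum : Summable (fun n : ℕ => (CBH.H n * CBH.c n) * x ^ n) :=
    CBH.summable_aux CBH.hb_hc hx
  have h0 := Summable.tsum_eq_zero_add hsum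
  have hA : CBH.A x = ∑' n : ℕ, (CBH.H n * CBH.c n) * x ^ n := rfl
  have hzero : (CBH.H 0 * CBH.c 0) * x ^ 0 = 0 := by
    rw [CBH.H_zero]; ring
  have h1 : ∑' n : ℕ, (CBH.H (n + 1) * CBH.c (n + 1)) * x ^ (n + 1) = CBH.A x := by
    rw [hA, h0, hzero, zero_add]
  have h2 : ∑' n : ℕ, (∑ k ∈ Finset.Icc 1 (n + 1), (1 : ℝ) / k) *
      ((2 * (n + 1)).choose (n + 1)) * x ^ (n + 1)
      = ∑' n : ℕ, (CBH.H (n + 1) * CBH.c (n + 1)) * x ^ (n + 1) := by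
    apply tsum_congr
    intro n
    unfold CBH.H CBH.c
    ring
  rw [h2, h1, hm]
  rfl
end

section
/- The sum ∑_{n=0}^∞ C(2n,n) / ((n+1)² · 4^n) equals 4 - 4·log 2. -/
open Finset

noncomputable def aa (n : ℕ) : ℝ := ((2 * n).choose n : ℝ) / 4 ^ n

lemma aa_zero : aa 0 = 1 := by simp [aa]

lemma aa_nonneg (n : ℕ) : 0 ≤ aa n := by unfold aa; positivity

lemma aa_succ (n : ℕ) : aa (n + 1) = aa n * (2 * n + 1) / (2 * n + 2) := by
  have h := Nat.succ_mul_centralBinom_succ n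
  have h' : ((n + 1 : ℕ) : ℝ) * ((2 * (n+1)).choose (n+1) : ℝ)
      = 2 * (2 * n + 1) * ((2*n).choose n : ℝ) := by
    have := congrArg (fun m : ℕ => (m : ℝ)) h
    push_cast [Nat.centralBinom] at this ⊢
    linarith [this]
  have h4 : (4:ℝ) ^ (n+1) = 4 ^ n * 4 := by ring
  have hp : (0:ℝ) < 4 ^ n := by positivity
  unfold aa
  field_simp [h4]
  push_cast at h' ⊢
  linear_combination (2 * (4:ℝ)^n) * h'

lemma aa_le_one (n : ℕ) : aa n ≤ 1 := by
  induction n with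
  | zero => simp [aa]
  | succ k ih =>
    rw [aa_succ]
    have h1 : aa k * (2 * k + 1) ≤ 1 * (2 * k + 2) := by
      have : aa k * (2*k+1) ≤ 1 * (2*k+1) := by
        apply mul_le_mul_of_nonneg_right ih; positivity
      linarith
    rw [div_le_one (by positivity)]
    linarith

lemma ring_choose_succ (r : ℝ) (k : ℕ) :
    Ring.choose r (k + 1) = Ring.choose r k * (r - k) / (k + 1) := by
  have h1 := Ring.descPochhammer_eq_factorial_smul_choose (R := ℝ) r (k + 1)
  have h2 := Ring.descPochhammer_eq_factorial_smul_choose (R := ℝ) r k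
  rw [descPochhammer_succ_right, Polynomial.smeval_mul, h2, Polynomial.smeval_sub,
    Polynomial.smeval_X, Polynomial.smeval_natCast] at h1
  have hk1 : ((k+1).factorial : ℝ) ≠ 0 := by positivity
  rw [eq_div_iff (by positivity : ((k:ℝ)+1) ≠ 0)]
  have h3 : ((k+1).factorial : ℝ) = (k.factorial : ℝ) * (k + 1) := by
    rw [Nat.factorial_succ]; push_cast; ring
  have h1' : ((k+1).factorial : ℝ) * Ring.choose r (k+1)
      = (k.factorial : ℝ) * Ring.choose r k * (r - k) := by
    simpa [nsmul_eq_mul, pow_one, pow_zero, smul_eq_mul] using h1.symm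
  rw [h3] at h1'
  have hkf : (0:ℝ) < (k.factorial : ℝ) := by positivity
  nlinarith [h1']

lemma ring_choose_neg_one (k : ℕ) : Ring.choose (-1 : ℝ) k = (-1) ^ k := by
  induction k with
  | zero => simp [Ring.choose_zero_right]
  | succ n ih =>
    rw [ring_choose_succ, ih]
    field_simp
    ring

lemma ring_choose_neg_half (k : ℕ) : Ring.choose (-(1/2) : ℝ) k = (-1) ^ k * aa k := by
  induction k with
  | zero => simp [Ring.choose_zero_right, aa_zero]
  | succ n ih =>
    rw [ring_choose_succ, ih, aa_succ]
    have h : ((n:ℝ) + 1) ≠ 0 := by positivity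
    have h2 : (2*(n:ℝ) + 2) ≠ 0 := by positivity
    field_simp
    ring

lemma conv_aa (n : ℕ) : ∑ ij ∈ Finset.HasAntidiagonal.antidiagonal n, aa ij.1 * aa ij.2 = 1 := by
  have h := Ring.add_choose_eq (R := ℝ) (r := -(1/2)) (s := -(1/2)) n (Commute.all _ _)
  have hh : (-(1/2) : ℝ) + -(1/2) = -1 := by norm_num
  rw [hh, ring_choose_neg_one] at h
  have h2 : ∑ ij ∈ Finset.HasAntidiagonal.antidiagonal n, Ring.choose (-(1/2):ℝ) ij.1 * Ring.choose (-(1/2):ℝ) ij.2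
      = (-1)^n * ∑ ij ∈ Finset.HasAntidiagonal.antidiagonal n, aa ij.1 * aa ij.2 := by
    rw [Finset.mul_sum]
    apply Finset.sum_congr rfl
    intro ij hij
    rw [ring_choose_neg_half, ring_choose_neg_half]
    have hn : ij.1 + ij.2 = n := Finset.HasAntidiagonal.mem_antidiagonal.mp hij
    rw [← hn, pow_add]
    ring
  rw [h2] at h
  have hne : ((-1:ℝ))^n ≠ 0 := by
    simp [pow_ne_zero]
  have h' : ((-1:ℝ))^n * 1 = (-1)^n * ∑ ij ∈ Finset.HasAntidiagonal.antidiagonal n, aa ij.1 * aa ij.2 := by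
    rw [mul_one]; exact h
  exact (mul_left_cancel₀ hne h').symm

lemma summable_aa_mul {x : ℝ} (h0 : 0 ≤ x) (h1 : x < 1) :
    Summable (fun n => aa n * x ^ n) := by
  apply Summable.of_nonneg_of_le (fun n => mul_nonneg (aa_nonneg n) (pow_nonneg h0 n))
    (fun n => ?_) (summable_geometric_of_lt_one h0 h1)
  calc aa n * x ^ n ≤ 1 * x ^ n := by
        apply mul_le_mul_of_nonneg_right (aa_le_one n) (by positivity)
    _ = x ^ n := one_mul _

lemma hasSum_aa {x : ℝ} (h0 : 0 ≤ x) (h1 : x < 1) :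
    HasSum (fun n => aa n * x ^ n) ((Real.sqrt (1 - x))⁻¹) := by
  have hsum := summable_aa_mul h0 h1
  set s := ∑' n, aa n * x ^ n with hs_def
  have hs : HasSum (fun n => aa n * x ^ n) s := hsum.hasSum
  have hnorm : Summable (fun n => ‖aa n * x ^ n‖) := by
    have : (fun n => ‖aa n * x ^ n‖) = fun n => aa n * x ^ n := by
      funext n
      exact Real.norm_of_nonneg (mul_nonneg (aa_nonneg n) (pow_nonneg h0 n))
    rw [this]; exact hsum
  have hprod := hasSum_sum_range_mul_of_summable_norm hnorm hnorm
  have hxn : (fun n => ∑ k ∈ Finset.range (n + 1),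
      (aa k * x ^ k) * (aa (n - k) * x ^ (n - k))) = fun n => x ^ n := by
    funext n
    have h1' : ∑ k ∈ Finset.range (n + 1), (aa k * x ^ k) * (aa (n - k) * x ^ (n - k))
        = ∑ k ∈ Finset.range (n + 1), aa k * aa (n - k) * x ^ n := by
      apply Finset.sum_congr rfl
      intro k hk
      have hkn : k ≤ n := Nat.lt_succ_iff.mp (Finset.mem_range.mp hk)
      have : x ^ k * x ^ (n - k) = x ^ n := by
        rw [← pow_add]; congr 1; omega
      rw [show aa k * x ^ k * (aa (n - k) * x ^ (n - k))
          = aa k * aa (n - k) * (x ^ k * x ^ (n - k)) by ring, this]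
    rw [h1', ← Finset.sum_mul]
    have h2' : ∑ k ∈ Finset.range (n + 1), aa k * aa (n - k) = 1 := by
      rw [← Finset.Nat.sum_antidiagonal_eq_sum_range_succ_mk (fun ij => aa ij.1 * aa ij.2)]
      exact conv_aa n
    rw [h2', one_mul]
  rw [hxn] at hprod
  have hgeo : HasSum (fun n => x ^ n) (1 - x)⁻¹ := hasSum_geometric_of_lt_one h0 h1
  have hss : s * s = (1 - x)⁻¹ := hprod.unique hgeo
  have hs1 : (1:ℝ) ≤ s := by
    have := le_hasSum hs 0 (fun i _ => mul_nonneg (aa_nonneg i) (pow_nonneg h0 i))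
    simpa [aa_zero] using this
  have hsval : s = (Real.sqrt (1 - x))⁻¹ := by
    have h0s : 0 ≤ s := by linarith
    have : s = Real.sqrt (s * s) := by
      rw [Real.sqrt_mul_self h0s]
    rw [this, hss, ← Real.sqrt_inv]
  rw [← hsval]
  exact hs

open MeasureTheory intervalIntegral in
lemma hasSum_aa_int {x : ℝ} (h0 : 0 < x) (h1 : x < 1) :
    HasSum (fun n => aa n * x ^ (n + 1) / (n + 1)) (2 - 2 * Real.sqrt (1 - x)) := by
  set μ := volume.restrict (Set.Ioc (0:ℝ) x) with hμ
  have hFint : ∀ n : ℕ, Integrable (fun t : ℝ => aa n * t ^ n) μ := by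
    intro n
    exact (continuous_const.mul (continuous_pow n)).integrableOn_Ioc
  have hval : ∀ n : ℕ, ∫ t, aa n * t ^ n ∂μ = aa n * x ^ (n + 1) / (n + 1) := by
    intro n
    rw [hμ, ← intervalIntegral.integral_of_le h0.le, intervalIntegral.integral_const_mul,
      integral_pow]
    simp
    ring
  have hnorm : ∀ n : ℕ, ∫ t, ‖aa n * t ^ n‖ ∂μ = aa n * x ^ (n + 1) / (n + 1) := by
    intro n
    rw [← hval n]
    rw [hμ]
    apply setIntegral_congr_fun measurableSet_Ioc
    intro t ht
    exact Real.norm_of_nonneg (mul_nonneg (aa_nonneg n) (pow_nonneg ht.1.le n))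
  have hsum : Summable fun n : ℕ => ∫ t, ‖aa n * t ^ n‖ ∂μ := by
    simp_rw [hnorm]
    apply Summable.of_nonneg_of_le
      (fun n => by have := aa_nonneg n; positivity)
      (fun n => ?_) ((summable_geometric_of_lt_one h0.le h1).mul_right x)
    have hxp : (0:ℝ) < x ^ (n+1) := by positivity
    have h1n : (1:ℝ) ≤ (n:ℝ) + 1 := by have : (0:ℝ) ≤ n := Nat.cast_nonneg n; linarith
    calc aa n * x ^ (n + 1) / (↑n + 1) ≤ 1 * x ^ (n+1) / 1 := by
          apply div_le_div₀ (by positivity)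
            (mul_le_mul_of_nonneg_right (aa_le_one n) hxp.le) one_pos h1n
      _ = x ^ n * x := by ring

  have key := hasSum_integral_of_summable_integral_norm hFint hsum
  have hint2 : (∫ t, (∑' n : ℕ, aa n * t ^ n) ∂μ) = 2 - 2 * Real.sqrt (1 - x) := by
    have hcongr : (∫ t, (∑' n : ℕ, aa n * t ^ n) ∂μ)
        = ∫ t in Set.Ioc (0:ℝ) x, (Real.sqrt (1 - t))⁻¹ := by
      rw [hμ]
      apply setIntegral_congr_fun measurableSet_Ioc
      intro t ht
      exact (hasSum_aa ht.1.le (lt_of_le_of_lt ht.2 h1)).tsum_eq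
    rw [hcongr, ← intervalIntegral.integral_of_le h0.le]
    have hFTC := intervalIntegral.integral_eq_sub_of_hasDerivAt_of_le h0.le
      (f := fun t => -2 * Real.sqrt (1 - t)) (f' := fun t => (Real.sqrt (1 - t))⁻¹)
      ((continuous_const.mul (Real.continuous_sqrt.comp
        (continuous_const.sub continuous_id))).continuousOn) ?_ ?_
    · rw [hFTC]
      norm_num [Real.sqrt_one]
      ring
    · intro t ht
      have h1t : 0 < 1 - t := by
        have := ht.2
        linarith
      have hst : 0 < Real.sqrt (1 - t) := Real.sqrt_pos.mpr h1t
      have hder : HasDerivAt (fun t : ℝ => Real.sqrt (1 - t))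
          (1 / (2 * Real.sqrt (1 - t)) * (-1)) t := by
        exact (Real.hasDerivAt_sqrt (ne_of_gt h1t)).comp t ((hasDerivAt_id t).const_sub 1)
      have := hder.const_mul (-2 : ℝ)
      refine this.congr_deriv ?_
      field_simp
    · apply ContinuousOn.intervalIntegrable
      apply ContinuousOn.inv₀
      · exact (Real.continuous_sqrt.comp (continuous_const.sub continuous_id)).continuousOn
      · intro t ht
        rw [Set.uIcc_of_le h0.le] at ht
        have h1t : 0 < 1 - t := by
          have := ht.2
          linarith
        exact ne_of_gt (Real.sqrt_pos.mpr h1t)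
  rw [hint2] at key
  simp_rw [hval] at key
  exact key

lemma tsum_aa_div {x : ℝ} (h0 : 0 < x) (h1 : x < 1) :
    ∑' n : ℕ, aa n * x ^ n / (n + 1) = 2 / (1 + Real.sqrt (1 - x)) := by
  have key := (hasSum_aa_int h0 h1).div_const x
  have hx : x ≠ 0 := ne_of_gt h0
  have heq : (fun n : ℕ => aa n * x ^ (n + 1) / (n + 1) / x)
      = fun n : ℕ => aa n * x ^ n / (n + 1) := by
    funext n
    field_simp
    ring
  rw [heq] at key
  rw [key.tsum_eq]
  have hs : Real.sqrt (1 - x) ^ 2 = 1 - x := Real.sq_sqrt (by linarith)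
  have hpos : 0 < 1 + Real.sqrt (1 - x) := by positivity
  rw [div_eq_div_iff hx (ne_of_gt hpos)]
  nlinarith [hs]

open MeasureTheory intervalIntegral in
theorem sum_central_binom_div_succ_sq :
    ∑' n : ℕ, ((2 * n).choose n : ℝ) / ((n + 1) ^ 2 * 4 ^ n)
      = 4 - 4 * Real.log 2 := by
  have hterm : (fun n : ℕ => ((2 * n).choose n : ℝ) / ((n + 1) ^ 2 * 4 ^ n))
      = fun n : ℕ => aa n / ((n : ℝ) + 1) ^ 2 := by
    funext n
    rw [aa, div_div]
    ring_nf
  rw [hterm]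
  set μ := volume.restrict (Set.Ioc (0:ℝ) 1) with hμ
  have hFint : ∀ n : ℕ, Integrable (fun t : ℝ => aa n * t ^ n / (n + 1)) μ := by
    intro n
    exact ((continuous_const.mul (continuous_pow n)).div_const _).integrableOn_Ioc
  have hval : ∀ n : ℕ, ∫ t, aa n * t ^ n / (n + 1) ∂μ = aa n / ((n : ℝ) + 1) ^ 2 := by
    intro n
    have hrw : (fun t : ℝ => aa n * t ^ n / (n + 1))
        = fun t : ℝ => (aa n / (n + 1)) * t ^ n := by
      funext t; ring
    rw [hμ, ← intervalIntegral.integral_of_le zero_le_one, hrw,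
      intervalIntegral.integral_const_mul, integral_pow]
    have hn : ((n:ℝ) + 1) ≠ 0 := by positivity
    rw [one_pow, zero_pow (by omega : n + 1 ≠ 0), sub_zero]
    rw [sq]
    field_simp
  have hnorm : ∀ n : ℕ, ∫ t, ‖aa n * t ^ n / (n + 1)‖ ∂μ = aa n / ((n : ℝ) + 1) ^ 2 := by
    intro n
    rw [← hval n, hμ]
    apply setIntegral_congr_fun measurableSet_Ioc
    intro t ht
    have hn : (0:ℝ) ≤ (n:ℝ) + 1 := by positivity
    exact Real.norm_of_nonneg
      (div_nonneg (mul_nonneg (aa_nonneg n) (pow_nonneg ht.1.le n)) hn)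
  have hsum : Summable fun n : ℕ => ∫ t, ‖aa n * t ^ n / (n + 1)‖ ∂μ := by
    simp_rw [hnorm]
    have hbase : Summable fun n : ℕ => 1 / ((n : ℝ) + 1) ^ 2 := by
      have h2 := (summable_nat_add_iff 1).mpr
        (Real.summable_one_div_nat_pow.mpr (by norm_num : 1 < 2))
      simpa [push_cast] using h2
    apply Summable.of_nonneg_of_le
      (fun n => by have := aa_nonneg n; positivity) (fun n => ?_) hbase
    gcongr
    exact aa_le_one n
  have key := hasSum_integral_of_summable_integral_norm hFint hsum
  have hint : (∫ t, (∑' n : ℕ, aa n * t ^ n / (n + 1)) ∂μ) = 4 - 4 * Real.log 2 := by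
    have hgpos : ∀ t : ℝ, 0 < 1 + Real.sqrt (1 - t) := by
      intro t
      have := Real.sqrt_nonneg (1 - t)
      linarith
    have hgden : Continuous fun t : ℝ => 1 + Real.sqrt (1 - t) :=
      continuous_const.add (Real.continuous_sqrt.comp (continuous_const.sub continuous_id))
    have hgc : Continuous fun t : ℝ => 2 / (1 + Real.sqrt (1 - t)) :=
      continuous_const.div hgden (fun t => ne_of_gt (hgpos t))
    have h1 : (∫ t, (∑' n : ℕ, aa n * t ^ n / (n + 1)) ∂μ)
        = ∫ t in Set.Ioo (0:ℝ) 1, (∑' n : ℕ, aa n * t ^ n / (n + 1)) := by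
      rw [hμ, integral_Ioc_eq_integral_Ioo]
    have h2 : ∫ t in Set.Ioo (0:ℝ) 1, (∑' n : ℕ, aa n * t ^ n / (n + 1))
        = ∫ t in Set.Ioo (0:ℝ) 1, 2 / (1 + Real.sqrt (1 - t)) :=
      setIntegral_congr_fun measurableSet_Ioo (fun t ht => tsum_aa_div ht.1 ht.2)
    have h3 : ∫ t in Set.Ioo (0:ℝ) 1, 2 / (1 + Real.sqrt (1 - t))
        = ∫ t in (0:ℝ)..1, 2 / (1 + Real.sqrt (1 - t)) := by
      rw [intervalIntegral.integral_of_le zero_le_one, integral_Ioc_eq_integral_Ioo]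
    have hFTC : ∫ t in (0:ℝ)..1, 2 / (1 + Real.sqrt (1 - t)) = 4 - 4 * Real.log 2 := by
      have hcont : ContinuousOn
          (fun t : ℝ => -4 * Real.sqrt (1 - t) + 4 * Real.log (1 + Real.sqrt (1 - t)))
          (Set.Icc 0 1) := by
        apply Continuous.continuousOn
        apply Continuous.add
        · exact continuous_const.mul (Real.continuous_sqrt.comp
            (continuous_const.sub continuous_id))
        · exact continuous_const.mul (hgden.log (fun t => ne_of_gt (hgpos t)))
      have hderiv : ∀ t ∈ Set.Ioo (0:ℝ) 1, HasDerivAt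
          (fun t : ℝ => -4 * Real.sqrt (1 - t) + 4 * Real.log (1 + Real.sqrt (1 - t)))
          (2 / (1 + Real.sqrt (1 - t))) t := by
        intro t ht
        have h1t : 0 < 1 - t := by have := ht.2; linarith
        have hspos : 0 < Real.sqrt (1 - t) := Real.sqrt_pos.mpr h1t
        have hds : HasDerivAt (fun u : ℝ => Real.sqrt (1 - u))
            (1 / (2 * Real.sqrt (1 - t)) * (-1)) t :=
          (Real.hasDerivAt_sqrt (ne_of_gt h1t)).comp t ((hasDerivAt_id t).const_sub 1)
        have hlog : HasDerivAt (fun u : ℝ => Real.log (1 + Real.sqrt (1 - u)))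
            ((1 / (2 * Real.sqrt (1 - t)) * (-1)) / (1 + Real.sqrt (1 - t))) t :=
          HasDerivAt.log (hds.const_add 1) (ne_of_gt (hgpos t))
        have hcomb := (hds.const_mul (-4 : ℝ)).add (hlog.const_mul (4 : ℝ))
        refine hcomb.congr_deriv ?_
        have hne : Real.sqrt (1 - t) ≠ 0 := ne_of_gt hspos
        have hne2 : (1 : ℝ) + Real.sqrt (1 - t) ≠ 0 := ne_of_gt (hgpos t)
        field_simp
        ring
      have h := intervalIntegral.integral_eq_sub_of_hasDerivAt_of_le zero_le_one
        hcont hderiv (hgc.intervalIntegrable 0 1)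
      rw [h]
      norm_num [Real.sqrt_one, Real.sqrt_zero, Real.log_one]
      ring
    rw [h1, h2, h3, hFTC]
  rw [hint] at key
  simp_rw [hval] at key
  exact key.tsum_eq
end

section
/- The sum ∑_{n=1}^∞ H_n · C(2n,n) / ((2n-1) · 4^n) equals 2. -/
open Filter Real Topology

noncomputable def bb (n : ℕ) : ℝ := (Nat.centralBinom n : ℝ) / 4 ^ n

lemma bb_nonneg (n : ℕ) : 0 ≤ bb n := by unfold bb; positivity

lemma bb_rec (n : ℕ) : bb (n + 1) * (2 * n + 2) = bb n * (2 * n + 1) := by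
  have h := Nat.succ_mul_centralBinom_succ n
  have h' : ((n : ℝ) + 1) * Nat.centralBinom (n + 1) = 2 * (2 * n + 1) * Nat.centralBinom n := by
    exact_mod_cast congrArg (Nat.cast : ℕ → ℝ) h
  unfold bb
  have h4 : (4 : ℝ) ^ (n + 1) = 4 ^ n * 4 := by ring
  rw [h4]
  field_simp
  nlinarith [h', pow_pos (show (0:ℝ) < 4 by norm_num) n]

lemma partial_sum (N : ℕ) :
    ∑ n ∈ Finset.range N, (∑ k ∈ Finset.Icc 1 (n + 1), (1 : ℝ) / k) *
        ((2 * (n + 1)).choose (n + 1)) / ((2 * (n + 1) - 1) * 4 ^ (n + 1))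
      = 2 - (2 + ∑ k ∈ Finset.Icc 1 N, (1 : ℝ) / k) * bb N := by
  induction N with
  | zero => simp [bb, Nat.centralBinom]
  | succ N ih =>
    rw [Finset.sum_range_succ, ih, Finset.sum_Icc_succ_top (by omega : 1 ≤ N + 1)]
    have hrec := bb_rec N
    have hcb : ((2 * (N + 1)).choose (N + 1) : ℝ) = bb (N + 1) * 4 ^ (N + 1) := by
      unfold bb Nat.centralBinom
      field_simp
    rw [hcb]
    set h := ∑ k ∈ Finset.Icc 1 N, (1 : ℝ) / k
    set x := bb N
    set y := bb (N + 1)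
    have hc1 : ((N : ℝ) + 1) ≠ 0 := by positivity
    have hc2 : (2 * ((N : ℝ) + 1) - 1) ≠ 0 := by
      have : (0:ℝ) ≤ N := Nat.cast_nonneg N
      nlinarith
    have hx : x = y * (2 * (N : ℝ) + 2) / (2 * (N : ℝ) + 1) := by
      have : (2 * (N : ℝ) + 1) ≠ 0 := by positivity
      field_simp
      linarith [hrec]
    rw [hx]
    have h4 : (4 : ℝ) ^ (N + 1) ≠ 0 := by positivity
    push_cast
    field_simp
    ring

lemma bb_sq_le (n : ℕ) : bb n ^ 2 * (2 * n + 1) ≤ 1 := by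
  induction n with
  | zero => simp [bb, Nat.centralBinom]
  | succ n ih =>
    have hrec := bb_rec n
    have hx := bb_nonneg n
    have hy := bb_nonneg (n + 1)
    have hc : (0:ℝ) ≤ (n:ℝ) := Nat.cast_nonneg n
    have hy2 : (bb (n + 1) * (2 * n + 2)) ^ 2 = (bb n * (2 * n + 1)) ^ 2 := by rw [hrec]
    have hih : bb n ^ 2 * (2 * (n:ℝ) + 1) * (2 * (n:ℝ) + 2) ^ 2 ≤ 1 * (2 * (n:ℝ) + 2) ^ 2 :=
      mul_le_mul_of_nonneg_right ih (by positivity)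
    rw [one_mul] at hih
    push_cast
    nlinarith [hy2, hih, mul_nonneg (mul_nonneg (sq_nonneg (bb n)) (by linarith : (0:ℝ) ≤ 2 * (n:ℝ) + 1)) (by norm_num : (0:ℝ) ≤ 1)]

lemma bb_le (n : ℕ) : bb n ≤ 1 / Real.sqrt (n + 1) := by
  have h1 : (0:ℝ) < (n:ℝ) + 1 := by positivity
  have h2 : bb n ^ 2 ≤ (1 / Real.sqrt ((n:ℝ) + 1)) ^ 2 := by
    rw [div_pow, one_pow, Real.sq_sqrt h1.le, le_div_iff₀ h1]
    have := bb_sq_le n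
    nlinarith [sq_nonneg (bb n), (Nat.cast_nonneg n : (0:ℝ) ≤ n)]
  have h3 : (0:ℝ) ≤ 1 / Real.sqrt ((n:ℝ) + 1) := by positivity
  nlinarith [bb_nonneg n, h2, h3]

lemma H_eq (n : ℕ) : (∑ k ∈ Finset.Icc 1 n, (1 : ℝ) / k) = (harmonic n : ℝ) := by
  rw [harmonic_eq_sum_Icc]
  push_cast
  simp [one_div]

lemma H_le (n : ℕ) : (∑ k ∈ Finset.Icc 1 n, (1 : ℝ) / k) ≤ 1 + Real.log n := by
  rw [H_eq]
  exact harmonic_le_one_add_log n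

lemma H_nonneg (n : ℕ) : 0 ≤ ∑ k ∈ Finset.Icc 1 n, (1 : ℝ) / k := by
  apply Finset.sum_nonneg
  intro k hk
  positivity

lemma tail_tendsto :
    Tendsto (fun N : ℕ => (2 + ∑ k ∈ Finset.Icc 1 N, (1 : ℝ) / k) * bb N)
      atTop (𝓝 0) := by
  have hg : Tendsto (fun x : ℝ => (3 + Real.log x) / Real.sqrt x) atTop (𝓝 0) := by
    have h1 : Tendsto (fun x : ℝ => 3 / x ^ ((1:ℝ)/2)) atTop (𝓝 0) :=
      tendsto_const_nhds.div_atTop (tendsto_rpow_atTop (by norm_num))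
    have h2 : Tendsto (fun x : ℝ => Real.log x / x ^ ((1:ℝ)/2)) atTop (𝓝 0) :=
      (isLittleO_log_rpow_atTop (by norm_num : (0:ℝ) < 1/2)).tendsto_div_nhds_zero
    have h3 := h1.add h2
    rw [add_zero] at h3
    refine h3.congr' ?_
    filter_upwards [eventually_ge_atTop (0:ℝ)] with x hx
    rw [Real.sqrt_eq_rpow]
    ring
  have hgn : Tendsto (fun n : ℕ => (3 + Real.log n) / Real.sqrt n) atTop (𝓝 0) :=
    hg.comp tendsto_natCast_atTop_atTop
  apply squeeze_zero' ?_ ?_ hgn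
  · filter_upwards with n
    exact mul_nonneg (by linarith [H_nonneg n]) (bb_nonneg n)
  · filter_upwards [eventually_ge_atTop 1] with n hn
    have hn1 : (1:ℝ) ≤ (n:ℝ) := by exact_mod_cast hn
    have hlog : (0:ℝ) ≤ Real.log n := Real.log_nonneg hn1
    have hs : (0:ℝ) < Real.sqrt n := Real.sqrt_pos.mpr (by linarith)
    have hb1 : bb n ≤ 1 / Real.sqrt (n + 1) := bb_le n
    have hb2 : (1:ℝ) / Real.sqrt ((n:ℝ) + 1) ≤ 1 / Real.sqrt n := by
      apply div_le_div_of_nonneg_left one_pos.le hs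
      exact Real.sqrt_le_sqrt (by linarith)
    calc (2 + ∑ k ∈ Finset.Icc 1 n, (1 : ℝ) / k) * bb n
        ≤ (3 + Real.log n) * bb n := by
          apply mul_le_mul_of_nonneg_right _ (bb_nonneg n)
          linarith [H_le n]
      _ ≤ (3 + Real.log n) * (1 / Real.sqrt n) := by
          apply mul_le_mul_of_nonneg_left (hb1.trans hb2) (by linarith)
      _ = (3 + Real.log n) / Real.sqrt n := by ring

theorem sum_harmonic_central_binom_pred :
    ∑' n : ℕ, (∑ k ∈ Finset.Icc 1 (n + 1), (1 : ℝ) / k) *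
        ((2 * (n + 1)).choose (n + 1)) / ((2 * (n + 1) - 1) * 4 ^ (n + 1))
      = 2 := by
  have hnn : ∀ n : ℕ, 0 ≤ (∑ k ∈ Finset.Icc 1 (n + 1), (1 : ℝ) / k) *
        ((2 * (n + 1)).choose (n + 1)) / ((2 * (n + 1) - 1) * 4 ^ (n + 1)) := by
    intro n
    have h1 : (0:ℝ) < 2 * ((n:ℝ) + 1) - 1 := by
      have : (0:ℝ) ≤ (n:ℝ) := Nat.cast_nonneg n
      linarith
    have h2 : (0:ℝ) ≤ (∑ k ∈ Finset.Icc 1 (n + 1), (1 : ℝ) / k) := H_nonneg (n + 1)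
    positivity
  have key : HasSum (fun n : ℕ => (∑ k ∈ Finset.Icc 1 (n + 1), (1 : ℝ) / k) *
        ((2 * (n + 1)).choose (n + 1)) / ((2 * (n + 1) - 1) * 4 ^ (n + 1))) 2 := by
    rw [hasSum_iff_tendsto_nat_of_nonneg hnn]
    have : Tendsto (fun N : ℕ => 2 - (2 + ∑ k ∈ Finset.Icc 1 N, (1 : ℝ) / k) * bb N)
        atTop (𝓝 2) := by
      have := tendsto_const_nhds (x := (2:ℝ)) (f := atTop (α := ℕ)) |>.sub tail_tendsto
      simpa using this
    refine this.congr' ?_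
    filter_upwards with N
    rw [partial_sum]
  exact key.tsum_eq
end
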